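/- For every integer n ≥ 2 one has |(1/(24n+1)) · ∫_{−1}^{1} cot((π/2)·(x/√6 + 1/2)) · (√(1−x²) + 3√2/(π·√(24n+1))) · exp(−(π/(3√2))·√((1−x²)(24n+1))) dx| ≤ 28/(24n+1). -/
import Mathlib


open Real

set_option maxHeartbeats 1600000 in
theorem stmt10 :
    ∀ n : ℕ, 2 ≤ n →
      |(1 / (24 * (n:ℝ) + 1)) *
          ∫ x in (-1:ℝ)..1,
            Real.cot (π / 2 * (x / Real.sqrt 6 + 1 / 2)) *
              ((Real.sqrt (1 - x ^ 2) + 3 * Real.sqrt 2 / (π * Real.sqrt (24 * (n:ℝ) + 1))) *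
                Real.exp (-(π / (3 * Real.sqrt 2)) *
                  Real.sqrt ((1 - x ^ 2) * (24 * (n:ℝ) + 1))))| ≤
        28 / (24 * (n:ℝ) + 1) := by
  intro n hn
  have hn2 : (2:ℝ) ≤ (n:ℝ) := by exact_mod_cast hn
  have hc : (49:ℝ) ≤ 24 * (n:ℝ) + 1 := by linarith
  have hc0 : (0:ℝ) < 24 * (n:ℝ) + 1 := by linarith
  have h6 : (22/9:ℝ) ≤ Real.sqrt 6 := by
    nlinarith [Real.sq_sqrt (show (0:ℝ) ≤ 6 by norm_num), Real.sqrt_nonneg 6]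
  have h6pos : (0:ℝ) < Real.sqrt 6 := by linarith
  have hsc : (7:ℝ) ≤ Real.sqrt (24 * (n:ℝ) + 1) := by
    nlinarith [Real.sq_sqrt hc0.le, Real.sqrt_nonneg (24 * (n:ℝ) + 1)]
  have h2 : Real.sqrt 2 ≤ 3/2 := by
    nlinarith [Real.sq_sqrt (show (0:ℝ) ≤ 2 by norm_num), Real.sqrt_nonneg 2]
  have h2pos : (0:ℝ) < Real.sqrt 2 := Real.sqrt_pos.2 (by norm_num)
  have hπ : (3:ℝ) ≤ π := by linarith [Real.pi_gt_three]
  have hπ0 : (0:ℝ) < π := by linarith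
  have key : |∫ x in (-1:ℝ)..1,
      Real.cot (π / 2 * (x / Real.sqrt 6 + 1 / 2)) *
        ((Real.sqrt (1 - x ^ 2) + 3 * Real.sqrt 2 / (π * Real.sqrt (24 * (n:ℝ) + 1))) *
          Real.exp (-(π / (3 * Real.sqrt 2)) *
            Real.sqrt ((1 - x ^ 2) * (24 * (n:ℝ) + 1))))| ≤ 28 := by
    have hb := intervalIntegral.norm_integral_le_of_norm_le_const
      (a := (-1:ℝ)) (b := 1) (C := 14)
      (f := fun x => Real.cot (π / 2 * (x / Real.sqrt 6 + 1 / 2)) *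
        ((Real.sqrt (1 - x ^ 2) + 3 * Real.sqrt 2 / (π * Real.sqrt (24 * (n:ℝ) + 1))) *
          Real.exp (-(π / (3 * Real.sqrt 2)) *
            Real.sqrt ((1 - x ^ 2) * (24 * (n:ℝ) + 1)))))
      ?_
    · rw [Real.norm_eq_abs] at hb
      calc _ ≤ (14:ℝ) * |1 - (-1:ℝ)| := hb
        _ = 28 := by norm_num
    · intro x hx
      rw [Set.uIoc_of_le (by norm_num : (-1:ℝ) ≤ 1)] at hx
      obtain ⟨hx1, hx2⟩ := hx
      have hd : 1 / Real.sqrt 6 ≤ 9/22 := by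
        rw [div_le_div_iff₀ h6pos (by norm_num)]; linarith
      have hxd1 : -(9/22 : ℝ) ≤ x / Real.sqrt 6 := by
        have h1 : (-1:ℝ) / Real.sqrt 6 ≤ x / Real.sqrt 6 := by
          gcongr
        have h2' : -(9/22 : ℝ) ≤ (-1:ℝ) / Real.sqrt 6 := by
          rw [neg_div]
          have := hd
          linarith
        linarith
      have hxd2 : x / Real.sqrt 6 ≤ 9/22 := by
        have h1 : x / Real.sqrt 6 ≤ 1 / Real.sqrt 6 := by
          gcongr
        linarith
      set θ := π / 2 * (x / Real.sqrt 6 + 1 / 2) with hθdef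
      have hθlb : π / 22 ≤ θ := by
        rw [hθdef]
        nlinarith [mul_nonneg hπ0.le (show (0:ℝ) ≤ x / Real.sqrt 6 + 9/22 by linarith)]
      have hθub : θ ≤ π / 2 := by
        rw [hθdef]
        nlinarith [mul_nonneg hπ0.le (show (0:ℝ) ≤ 1 - (x / Real.sqrt 6 + 1/2) by linarith)]
      have hθ0 : 0 ≤ θ := le_trans (by positivity) hθlb
      have hsin : (1:ℝ)/11 ≤ Real.sin θ := by
        have hms := Real.mul_le_sin hθ0 hθub
        have h1 : 2 / π * (π / 22) ≤ 2 / π * θ := by gcongr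
        have h2' : 2 / π * (π / 22) = 1/11 := by field_simp; ring
        linarith
      have hsinpos : 0 < Real.sin θ := by linarith
      have hcot : |Real.cot θ| ≤ 11 := by
        rw [Real.cot_eq_cos_div_sin, abs_div, abs_of_pos hsinpos,
          div_le_iff₀ hsinpos]
        have hcos := Real.abs_cos_le_one θ
        nlinarith
      have hx2sq : (0:ℝ) ≤ 1 - x ^ 2 := by nlinarith
      have hs1 : Real.sqrt (1 - x ^ 2) ≤ 1 := by
        have := Real.sqrt_le_sqrt (show 1 - x ^ 2 ≤ 1 by nlinarith)
        simpa using this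
      have hπsc : (21:ℝ) ≤ π * Real.sqrt (24 * (n:ℝ) + 1) := by
        calc (21:ℝ) = 3 * 7 := by norm_num
          _ ≤ π * Real.sqrt (24 * (n:ℝ) + 1) :=
            mul_le_mul hπ hsc (by norm_num) hπ0.le
      have hfrac : 3 * Real.sqrt 2 / (π * Real.sqrt (24 * (n:ℝ) + 1)) ≤ 3/11 := by
        rw [div_le_div_iff₀ (by linarith) (by norm_num)]
        linarith
      have hexp : Real.exp (-(π / (3 * Real.sqrt 2)) *
          Real.sqrt ((1 - x ^ 2) * (24 * (n:ℝ) + 1))) ≤ 1 := by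
        rw [Real.exp_le_one_iff]
        have h1 : 0 ≤ π / (3 * Real.sqrt 2) * Real.sqrt ((1 - x ^ 2) * (24 * (n:ℝ) + 1)) := by
          positivity
        nlinarith
      have hg0 : 0 ≤ (Real.sqrt (1 - x ^ 2) + 3 * Real.sqrt 2 / (π * Real.sqrt (24 * (n:ℝ) + 1))) *
          Real.exp (-(π / (3 * Real.sqrt 2)) * Real.sqrt ((1 - x ^ 2) * (24 * (n:ℝ) + 1))) := by
        positivity
      have hgle : (Real.sqrt (1 - x ^ 2) + 3 * Real.sqrt 2 / (π * Real.sqrt (24 * (n:ℝ) + 1))) *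
          Real.exp (-(π / (3 * Real.sqrt 2)) * Real.sqrt ((1 - x ^ 2) * (24 * (n:ℝ) + 1))) ≤
          14/11 := by
        have := mul_le_mul (show Real.sqrt (1 - x ^ 2) +
            3 * Real.sqrt 2 / (π * Real.sqrt (24 * (n:ℝ) + 1)) ≤ 14/11 by linarith)
          hexp (Real.exp_pos _).le (by norm_num)
        linarith
      rw [Real.norm_eq_abs, abs_mul, abs_of_nonneg hg0]
      calc |Real.cot θ| * _ ≤ 11 * (14/11) :=
            mul_le_mul hcot hgle hg0 (by norm_num)
        _ = 14 := by norm_num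
  have habs : |(1 / (24 * (n:ℝ) + 1))| = 1 / (24 * (n:ℝ) + 1) := abs_of_pos (by positivity)
  rw [abs_mul, habs]
  calc (1 / (24 * (n:ℝ) + 1)) * _ ≤ (1 / (24 * (n:ℝ) + 1)) * 28 := by gcongr
    _ = 28 / (24 * (n:ℝ) + 1) := by ring
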